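/- Let Z_A, Z_B be a balanced partition of an n-vertex graph (n even) different from the ground-truth balanced partition A, B, with |Z_A ∩ A| ≥ n/4 and |Z_B ∩ B| ≥ n/4. Setting A_w = Z_B ∩ A and B_w = Z_A ∩ B, we have |A_w| = |B_w|, and if the cut of (Z_A, Z_B) is at most the cut of (A,B), then E(A_w, B∖B_w) + E(B_w, A∖A_w) ≥ E(A_w, A∖A_w) + E(B_w, B∖B_w). -/
import Mathlib


/-- Number of edges of `G` between two (disjoint) vertex sets `S` and `T`. -/
def edgeCount {V : Type*} [Fintype V] [DecidableEq V] (G : SimpleGraph V)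
    [DecidableRel G.Adj] (S T : Finset V) : ℕ :=
  ((S ×ˢ T).filter fun p => G.Adj p.1 p.2).card

lemma edgeCount_comm {V : Type*} [Fintype V] [DecidableEq V] (G : SimpleGraph V)
    [DecidableRel G.Adj] (S T : Finset V) : edgeCount G S T = edgeCount G T S := by
  unfold edgeCount
  apply Finset.card_bij' (fun p _ => p.swap) (fun p _ => p.swap)
  · intro p _; simp
  · intro p _; simp
  · intro p hp
    simp only [Finset.mem_filter, Finset.mem_product] at hp ⊢
    exact ⟨⟨hp.1.2, hp.1.1⟩, hp.2.symm⟩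
  · intro p hp
    simp only [Finset.mem_filter, Finset.mem_product] at hp ⊢
    exact ⟨⟨hp.1.2, hp.1.1⟩, hp.2.symm⟩

lemma edgeCount_union_left {V : Type*} [Fintype V] [DecidableEq V] (G : SimpleGraph V)
    [DecidableRel G.Adj] {S₁ S₂ : Finset V} (T : Finset V) (h : Disjoint S₁ S₂) :
    edgeCount G (S₁ ∪ S₂) T = edgeCount G S₁ T + edgeCount G S₂ T := by
  unfold edgeCount
  rw [Finset.union_product, Finset.filter_union, Finset.card_union_of_disjoint]
  refine Finset.disjoint_filter_filter ?_
  rw [Finset.disjoint_left]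
  intro p hp hp'
  simp only [Finset.mem_product] at hp hp'
  exact Finset.disjoint_left.mp h hp.1 hp'.1

lemma edgeCount_union_right {V : Type*} [Fintype V] [DecidableEq V] (G : SimpleGraph V)
    [DecidableRel G.Adj] (S : Finset V) {T₁ T₂ : Finset V} (h : Disjoint T₁ T₂) :
    edgeCount G S (T₁ ∪ T₂) = edgeCount G S T₁ + edgeCount G S T₂ := by
  rw [edgeCount_comm, edgeCount_union_left _ _ h, edgeCount_comm G T₁, edgeCount_comm G T₂]

theorem stmt_11 {V : Type*} [Fintype V] [DecidableEq V] (G : SimpleGraph V)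
    [DecidableRel G.Adj] (n : ℕ) (hn : Fintype.card V = n) (hneven : 2 ∣ n)
    (A B ZA ZB : Finset V)
    (hAB : Disjoint A B) (hABunion : A ∪ B = Finset.univ) (hA : A.card = n / 2)
    (hZ : Disjoint ZA ZB) (hZunion : ZA ∪ ZB = Finset.univ) (hZA : ZA.card = n / 2)
    (hdiff : ZA ≠ A ∧ ZA ≠ B)
    (hZAA : n ≤ 4 * (ZA ∩ A).card) (hZBB : n ≤ 4 * (ZB ∩ B).card) :
    (ZB ∩ A).card = (ZA ∩ B).card ∧
      (edgeCount G ZA ZB ≤ edgeCount G A B →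
        edgeCount G (ZB ∩ A) (B \ (ZA ∩ B)) + edgeCount G (ZA ∩ B) (A \ (ZB ∩ A)) ≥
          edgeCount G (ZB ∩ A) (A \ (ZB ∩ A)) + edgeCount G (ZA ∩ B) (B \ (ZA ∩ B))) := by
  -- membership characterizations
  have hZmem : ∀ x : V, x ∈ ZA ↔ x ∉ ZB := by
    intro x
    constructor
    · intro hx hx'; exact (Finset.disjoint_left.mp hZ hx) hx'
    · intro hx
      have : x ∈ ZA ∪ ZB := hZunion ▸ Finset.mem_univ x
      rcases Finset.mem_union.mp this with h | h
      · exact h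
      · exact absurd h hx
  have hAmem : ∀ x : V, x ∈ A ↔ x ∉ B := by
    intro x
    constructor
    · intro hx hx'; exact (Finset.disjoint_left.mp hAB hx) hx'
    · intro hx
      have : x ∈ A ∪ B := hABunion ▸ Finset.mem_univ x
      rcases Finset.mem_union.mp this with h | h
      · exact h
      · exact absurd h hx
  -- set decompositions
  have hAsd : A \ (ZB ∩ A) = ZA ∩ A := by
    ext x
    simp only [Finset.mem_sdiff, Finset.mem_inter]
    have := hZmem x; tauto
  have hBsd : B \ (ZA ∩ B) = ZB ∩ B := by
    ext x
    simp only [Finset.mem_sdiff, Finset.mem_inter]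
    have := hZmem x; tauto
  have hAdec : (ZA ∩ A) ∪ (ZB ∩ A) = A := by
    rw [← Finset.union_inter_distrib_right, hZunion, Finset.univ_inter]
  have hBdec : (ZA ∩ B) ∪ (ZB ∩ B) = B := by
    rw [← Finset.union_inter_distrib_right, hZunion, Finset.univ_inter]
  have hZAdec : (ZA ∩ A) ∪ (ZA ∩ B) = ZA := by
    rw [← Finset.inter_union_distrib_left, hABunion, Finset.inter_univ]
  have hZBdec : (ZB ∩ A) ∪ (ZB ∩ B) = ZB := by
    rw [← Finset.inter_union_distrib_left, hABunion, Finset.inter_univ]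
  -- disjointness
  have d1 : Disjoint (ZA ∩ A) (ZB ∩ A) := hZ.mono Finset.inter_subset_left Finset.inter_subset_left
  have d2 : Disjoint (ZA ∩ B) (ZB ∩ B) := hZ.mono Finset.inter_subset_left Finset.inter_subset_left
  have d3 : Disjoint (ZA ∩ A) (ZA ∩ B) := hAB.mono Finset.inter_subset_right Finset.inter_subset_right
  have d4 : Disjoint (ZB ∩ A) (ZB ∩ B) := hAB.mono Finset.inter_subset_right Finset.inter_subset_right
  -- cardinality claim
  have hcard : (ZB ∩ A).card = (ZA ∩ B).card := by
    have h1 : (ZA ∩ A).card + (ZB ∩ A).card = A.card := by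
      rw [← Finset.card_union_of_disjoint d1, hAdec]
    have h2 : (ZA ∩ A).card + (ZA ∩ B).card = ZA.card := by
      rw [← Finset.card_union_of_disjoint d3, hZAdec]
    omega
  refine ⟨hcard, ?_⟩
  intro hcut
  rw [hAsd, hBsd]
  -- expand cuts
  have eZ : edgeCount G ZA ZB =
      edgeCount G (ZA ∩ A) (ZB ∩ A) + edgeCount G (ZA ∩ A) (ZB ∩ B) +
      (edgeCount G (ZA ∩ B) (ZB ∩ A) + edgeCount G (ZA ∩ B) (ZB ∩ B)) := by
    conv_lhs => rw [← hZAdec, ← hZBdec]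
    rw [edgeCount_union_left _ _ d3,
      edgeCount_union_right _ _ d4, edgeCount_union_right _ _ d4]
  have eAB : edgeCount G A B =
      edgeCount G (ZA ∩ A) (ZA ∩ B) + edgeCount G (ZA ∩ A) (ZB ∩ B) +
      (edgeCount G (ZB ∩ A) (ZA ∩ B) + edgeCount G (ZB ∩ A) (ZB ∩ B)) := by
    conv_lhs => rw [← hAdec, ← hBdec]
    rw [edgeCount_union_left _ _ d1,
      edgeCount_union_right _ _ d2, edgeCount_union_right _ _ d2]
  have s1 : edgeCount G (ZA ∩ B) (ZB ∩ A) = edgeCount G (ZB ∩ A) (ZA ∩ B) :=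
    edgeCount_comm _ _ _
  have s2 : edgeCount G (ZA ∩ A) (ZB ∩ A) = edgeCount G (ZB ∩ A) (ZA ∩ A) :=
    edgeCount_comm _ _ _
  have s3 : edgeCount G (ZA ∩ A) (ZA ∩ B) = edgeCount G (ZA ∩ B) (ZA ∩ A) :=
    edgeCount_comm _ _ _
  rw [eZ, eAB] at hcut
  omega
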